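/- Let n ≥ 1 and m be integers with n ≡ m+1 (mod 2) and n ≠ m+1. Then N⁰(m,n) = Σ_{k=0}^{n−1} N(m+1−k, (n−m−1)/2). -/

import Mathlib

/-!
Let `σ` be an odd Durfee symbol with subscript `D`. Halving the entries of its top row
(`2c + 1 ↦ c`) and conjugating gives `D` rows, which are glued to the right of a
`D × (D + 1)` rectangle; the entries `b` of the bottom row become rows `(b + 1) / 2` below the
rectangle. The result is a partition `λ` of `j = (n - m - 1) / 2` of rank `m + 1 - k`, where `k`
is the number of entries `1` of the top row, the only information lost by halving.
Conversely `λ` determines `D` as the size of its largest `D × (D + 1)` rectangle, the top row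
from the columns of `λ` right of the rectangle together with `k` entries `1`, and the bottom row
from the rows below the rectangle. So `σ ↦ (k, λ)` is a bijection onto the pairs with `k < n`.
-/

/-- An odd Durfee symbol of `n`: a subscript `D` together with two nonincreasing
sequences of odd positive integers, each entry at most `2D+1`, whose total weight
together with `2D²+2D+1` equals `n`. -/
structure OddDurfeeSymbol (n : ℕ) where
  D : ℕ
  top : List ℕ
  bot : List ℕ
  top_sorted : top.Pairwise (· ≥ ·)
  bot_sorted : bot.Pairwise (· ≥ ·)
  top_odd : ∀ x ∈ top, Odd x
  bot_odd : ∀ x ∈ bot, Odd x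
  top_le : ∀ x ∈ top, x ≤ 2 * D + 1
  bot_le : ∀ x ∈ bot, x ≤ 2 * D + 1
  sum_eq : top.sum + bot.sum + 2 * D ^ 2 + 2 * D + 1 = n

/-- The odd rank of an odd Durfee symbol: the number of entries in the top row
minus the number of entries in the bottom row. -/
def oddRank {n : ℕ} (σ : OddDurfeeSymbol n) : ℤ :=
  (σ.top.length : ℤ) - (σ.bot.length : ℤ)

/-- `N⁰(m,n)`: the number of odd Durfee symbols of `n` with odd rank `m`. -/
noncomputable def N0 (m : ℤ) (n : ℕ) : ℕ :=
  Nat.card {σ : OddDurfeeSymbol n // oddRank σ = m}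

/-- `N⁰(a,M;n)`: the number of odd Durfee symbols of `n` with odd rank congruent
to `a` modulo `M`. -/
noncomputable def N0mod (a : ℤ) (M : ℕ) (n : ℕ) : ℕ :=
  Nat.card {σ : OddDurfeeSymbol n // oddRank σ ≡ a [ZMOD (M : ℤ)]}

/-- The rank of a partition: its largest part minus its number of parts. -/
def partitionRank {n : ℕ} (P : Nat.Partition n) : ℤ :=
  (P.parts.sup : ℤ) - (P.parts.card : ℤ)

/-- `N(m,n)`: the number of partitions of `n` with rank `m`; note this gives
`N(m,0) = 1` if `m = 0` and `0` otherwise. -/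
noncomputable def rankCount (m : ℤ) (n : ℕ) : ℕ :=
  Nat.card {P : Nat.Partition n // partitionRank P = m}

/-- `N(m,j)` for an integer argument `j`, with the convention `N(m,j) = 0` for `j < 0`. -/
noncomputable def rankCountZ (m : ℤ) (j : ℤ) : ℕ :=
  if 0 ≤ j then rankCount m j.toNat else 0

namespace List

variable {L : List ℕ}

theorem Pairwise.getElem_le_getElem_of_le (hL : L.Pairwise (· ≥ ·)) {i j : ℕ} (hij : i ≤ j)
    (hj : j < L.length) : L[j] ≤ L[i] :=
  hL.rel_get_of_le (a := ⟨i, by omega⟩) (b := ⟨j, hj⟩) hij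

theorem Pairwise.getD_antitone (hL : L.Pairwise (· ≥ ·)) : Antitone (L.getD · 0) := by
  intro i j hij
  show L.getD j 0 ≤ L.getD i 0
  by_cases hj : j < L.length
  · simp only [getD_eq_getElem _ _ hj, getD_eq_getElem _ _ (lt_of_le_of_lt hij hj)]
    exact hL.getElem_le_getElem_of_le hij hj
  · rw [getD_eq_default _ _ (not_lt.mp hj)]
    exact Nat.zero_le _

theorem Pairwise.le_headD (hL : L.Pairwise (· ≥ ·)) {x : ℕ} (hx : x ∈ L) : x ≤ L.headD 0 := by
  cases L with
  | nil => simp at hx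
  | cons a t =>
    rcases mem_cons.mp hx with rfl | h
    · exact le_rfl
    · exact (pairwise_cons.mp hL).1 x h

theorem Pairwise.sup_coe_eq_headD (hL : L.Pairwise (· ≥ ·)) : (L : Multiset ℕ).sup = L.headD 0 :=
  le_antisymm (Multiset.sup_le.mpr fun _ hx => hL.le_headD hx) <| by
    cases L with
    | nil => simp
    | cons a t => exact Multiset.le_sup (by simp)

theorem two_mul_sum_map_div_two_add_length (h : ∀ x ∈ L, Odd x) :
    2 * (L.map (· / 2)).sum + L.length = L.sum := by
  induction L with
  | nil => simp
  | cons a t ih =>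
    obtain ⟨c, rfl⟩ := h a mem_cons_self
    simp only [map_cons, sum_cons, length_cons]
    have := ih fun x hx => h x (mem_cons_of_mem _ hx)
    omega

theorem sum_map_two_mul_sub_one_add_length (h : ∀ x ∈ L, 0 < x) :
    (L.map (2 * · - 1)).sum + L.length = 2 * L.sum := by
  induction L with
  | nil => simp
  | cons a t ih =>
    have := h a mem_cons_self
    have := ih fun x hx => h x (mem_cons_of_mem _ hx)
    simp only [map_cons, sum_cons, length_cons]
    omega

theorem sum_map_sub_add_mul_length {c : ℕ} (h : ∀ x ∈ L, c ≤ x) :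
    (L.map (· - c)).sum + c * L.length = L.sum := by
  induction L with
  | nil => simp
  | cons a t ih =>
    have := h a mem_cons_self
    have := ih fun x hx => h x (mem_cons_of_mem _ hx)
    simp only [map_cons, sum_cons, length_cons, Nat.mul_succ]
    omega

theorem ne_nil_of_sum_pos (h : 0 < L.sum) : L ≠ [] := by
  rintro rfl
  simp at h

theorem countP_range_lt (c N : ℕ) : (range N).countP (· < c) = min c N := by
  induction N with
  | zero => simp
  | succ N ih =>
    rw [range_succ, countP_append, ih]
    by_cases h : N < c <;> simp [h] <;> omega

end List

namespace Ferrers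

open List

/-- The length of column `d` of the Ferrers diagram with rows `L`, columns counted from `0`. -/
def colLen (L : List ℕ) (d : ℕ) : ℕ := L.countP (d < ·)

variable {L : List ℕ}

theorem colLen_le_length (d : ℕ) : colLen L d ≤ L.length := countP_le_length

theorem colLen_antitone (L : List ℕ) : Antitone (colLen L) := fun _ _ h =>
  countP_mono_left fun x _ hx => by simp only [decide_eq_true_eq] at hx ⊢; omega

theorem colLen_pos_iff {d : ℕ} : 0 < colLen L d ↔ ∃ x ∈ L, d < x := by
  simp [colLen, countP_pos_iff]

theorem colLen_eq_zero {d : ℕ} (h : ∀ x ∈ L, x ≤ d) : colLen L d = 0 :=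
  countP_eq_zero.mpr fun x hx => by simpa using h x hx

theorem colLen_cons (a d : ℕ) : colLen (a :: L) d = colLen L d + if d < a then 1 else 0 := by
  simp [colLen, countP_cons]

theorem lt_colLen_iff (hL : L.Pairwise (· ≥ ·)) {i d : ℕ} (hi : i < L.length) :
    i < colLen L d ↔ d < L[i] := by
  induction L generalizing i with
  | nil => simp at hi
  | cons a L ih =>
    obtain ⟨ha, hL⟩ := pairwise_cons.mp hL
    cases i with
    | zero =>
      rw [getElem_cons_zero, colLen_pos_iff]
      exact ⟨fun ⟨x, hx, hdx⟩ => lt_of_lt_of_le hdx ((hL.cons ha).le_headD hx), fun h =>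
        ⟨a, mem_cons_self, h⟩⟩
    | succ i =>
      have hi : i < L.length := by simpa using hi
      rw [getElem_cons_succ, colLen_cons]
      by_cases hda : d < a
      · simp only [hda, if_true]
        have := ih hL hi
        omega
      · have hzero := colLen_eq_zero fun x hx => (ha x hx).trans (not_lt.mp hda)
        have := ha _ (getElem_mem hi)
        simp only [hzero, hda, if_false]
        omega

theorem sum_colLen {c N : ℕ} (hle : ∀ x ∈ L, x ≤ c + N) :
    ∑ i ∈ Finset.range N, colLen L (c + i) = (L.map (· - c)).sum := by
  induction L with
  | nil => simp [colLen]
  | cons a L ih =>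
    have hcount : ∑ i ∈ Finset.range N, (if c + i < a then 1 else 0) = a - c := by
      have := hle a mem_cons_self
      rw [Finset.sum_boole, Nat.cast_id, ← Finset.card_range (a - c)]
      congr 1
      ext i
      simp only [Finset.mem_filter, Finset.mem_range]
      omega
    simp only [colLen_cons, Finset.sum_add_distrib, hcount,
      ih fun x hx => hle x (mem_cons_of_mem _ hx), map_cons, sum_cons]
    omega

theorem colLen_map_colLen (hL : L.Pairwise (· ≥ ·)) {c N : ℕ} (hle : ∀ x ∈ L, x ≤ c + N)
    {i : ℕ} (hi : i < L.length) :
    colLen ((range N).map fun j => colLen L (c + j)) i = L[i] - c := by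
  have hle_i := hle _ (getElem_mem hi)
  rw [colLen, countP_map, ← min_eq_left (show L[i] - c ≤ N by omega), ← countP_range_lt]
  refine countP_congr fun j _ => ?_
  simp only [Function.comp_apply, decide_eq_true_eq, lt_colLen_iff hL hi]
  omega

/-- For nonincreasing `L`: the largest `D` such that the Ferrers diagram of `L` contains a
`D × (D + 1)` rectangle, i.e. such that its first `D` rows have length greater than `D`. -/
def durfee (L : List ℕ) : ℕ := ({d ∈ Finset.range L.length | d + 2 ≤ L.getD d 0} : Finset ℕ).card

theorem durfee_le_length (L : List ℕ) : durfee L ≤ L.length :=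
  (Finset.card_filter_le _ _).trans (Finset.card_range _).le

theorem lt_durfee_iff (hL : L.Pairwise (· ≥ ·)) {d : ℕ} :
    d < durfee L ↔ d < L.length ∧ d + 2 ≤ L.getD d 0 := by
  constructor
  · intro h
    by_contra hd
    have hsub : {e ∈ Finset.range L.length | e + 2 ≤ L.getD e 0} ⊆ Finset.range d := by
      intro e he
      simp only [Finset.mem_filter, Finset.mem_range] at he ⊢
      by_contra hde
      have := hL.getD_antitone (not_lt.mp hde)
      simp only at this
      exact hd ⟨by omega, by omega⟩
    exact absurd h (not_lt.mpr ((Finset.card_le_card hsub).trans_eq (Finset.card_range d)))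
  · rintro ⟨hd, hd2⟩
    have hsub : Finset.range (d + 1) ⊆ {e ∈ Finset.range L.length | e + 2 ≤ L.getD e 0} := by
      intro e he
      simp only [Finset.mem_filter, Finset.mem_range] at he ⊢
      have := hL.getD_antitone (show e ≤ d by omega)
      simp only at this
      omega
    exact (Finset.card_range (d + 1)).symm.trans_le (Finset.card_le_card hsub)

theorem durfee_lt_getElem (hL : L.Pairwise (· ≥ ·)) {d : ℕ} (hd : d < durfee L) :
    durfee L < L[d]'(hd.trans_le (durfee_le_length L)) := by
  have hlast := (lt_durfee_iff hL).mp (show durfee L - 1 < durfee L by omega)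
  have := hL.getD_antitone (show d ≤ durfee L - 1 by omega)
  simp only [getD_eq_getElem _ _ (hd.trans_le (durfee_le_length L))] at this
  omega

theorem lt_of_mem_take_durfee (hL : L.Pairwise (· ≥ ·)) {x : ℕ} (hx : x ∈ L.take (durfee L)) :
    durfee L < x := by
  obtain ⟨i, hi, rfl⟩ := mem_iff_getElem.mp hx
  rw [getElem_take]
  exact durfee_lt_getElem hL (by simp at hi; omega)

theorem le_of_mem_drop_durfee (hL : L.Pairwise (· ≥ ·)) {x : ℕ} (hx : x ∈ L.drop (durfee L)) :
    x ≤ durfee L + 1 := by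
  obtain ⟨i, hi, rfl⟩ := mem_iff_getElem.mp hx
  rw [length_drop] at hi
  have hnot : ¬ durfee L < durfee L := lt_irrefl _
  rw [lt_durfee_iff hL, getD_eq_getElem _ _ (by omega)] at hnot
  have := hL.getElem_le_getElem_of_le (Nat.le_add_right (durfee L) i) (by omega)
  rw [getElem_drop]
  omega

theorem colLen_durfee_succ_le (hL : L.Pairwise (· ≥ ·)) : colLen L (durfee L + 1) ≤ durfee L := by
  by_contra! h
  have hlen := h.trans_le (colLen_le_length _)
  have hrow := (lt_colLen_iff hL hlen).mp h
  have hnot : ¬ durfee L < durfee L := lt_irrefl _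
  rw [lt_durfee_iff hL, getD_eq_getElem _ _ hlen] at hnot
  omega

theorem durfee_lt_headD (hL : L.Pairwise (· ≥ ·)) (hpos : ∀ x ∈ L, 0 < x) (hne : L ≠ []) :
    durfee L < L.headD 0 := by
  obtain ⟨a, t, rfl⟩ := exists_cons_of_ne_nil hne
  rcases Nat.eq_zero_or_pos (durfee (a :: t)) with h | h
  · simpa [h] using hpos a mem_cons_self
  · simpa using durfee_lt_getElem hL h

theorem sum_map_sub_durfee (hL : L.Pairwise (· ≥ ·)) :
    (L.map (· - (durfee L + 1))).sum + (durfee L + 1) * durfee L + (L.drop (durfee L)).sum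
      = L.sum := by
  have hdrop : ((L.drop (durfee L)).map (· - (durfee L + 1))).sum = 0 :=
    sum_eq_zero fun x hx => by
      obtain ⟨r, hr, rfl⟩ := mem_map.mp hx
      have := le_of_mem_drop_durfee hL hr
      omega
  have htake := sum_map_sub_add_mul_length (c := durfee L + 1) fun x hx =>
    lt_of_mem_take_durfee hL hx
  rw [length_take, min_eq_left (durfee_le_length L)] at htake
  have hmap : (L.map (· - (durfee L + 1))).sum
      = ((L.take (durfee L)).map (· - (durfee L + 1))).sum
        + ((L.drop (durfee L)).map (· - (durfee L + 1))).sum := by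
    rw [← sum_append, ← map_append, take_append_drop]
  have hsum : L.sum = (L.take (durfee L)).sum + (L.drop (durfee L)).sum := by
    rw [← sum_append, take_append_drop]
  linarith

end Ferrers

namespace Nat.Partition

def equivSortedList (j : ℕ) :
    Nat.Partition j ≃ {L : List ℕ // L.Pairwise (· ≥ ·) ∧ (∀ x ∈ L, 0 < x) ∧ L.sum = j} where
  toFun P := ⟨P.parts.sort (· ≥ ·), Multiset.pairwise_sort _ _,
    fun _ hx => P.parts_pos ((Multiset.mem_sort _).mp hx),
    by rw [← Multiset.sum_coe, Multiset.sort_eq, P.parts_sum]⟩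
  invFun L := ⟨L.1, fun hx => L.2.2.1 _ hx, by rw [Multiset.sum_coe, L.2.2.2]⟩
  left_inv P := Nat.Partition.ext (Multiset.sort_eq _ _)
  right_inv L := Subtype.ext ((Multiset.coe_sort _ _).trans (List.mergeSort_eq_self _ L.2.1))

theorem partitionRank_eq {j : ℕ} (P : Nat.Partition j) :
    partitionRank P = ((equivSortedList j P).1.headD 0 : ℤ) - (equivSortedList j P).1.length := by
  have h : ((equivSortedList j P).1 : Multiset ℕ) = P.parts := Multiset.sort_eq _ _
  rw [partitionRank, ← h, Multiset.coe_card, (equivSortedList j P).2.1.sup_coe_eq_headD]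

end Nat.Partition

namespace OddDurfeeSymbol

open List Ferrers Nat.Partition

section Parts

variable {n : ℕ} (σ : OddDurfeeSymbol n)

theorem ext {τ : OddDurfeeSymbol n} (hD : σ.D = τ.D) (htop : σ.top = τ.top)
    (hbot : σ.bot = τ.bot) : σ = τ := by
  cases σ; cases τ; simp_all

theorem top_length_lt : σ.top.length < n := by
  have := length_le_sum_of_one_le σ.top fun x hx => (σ.top_odd x hx).pos
  have := σ.sum_eq
  omega

theorem oddRank_lt : oddRank σ < n := by
  have := σ.top_length_lt
  unfold oddRank
  omega

def halfTop : List ℕ := σ.top.map (· / 2)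

def parts : List ℕ :=
  (range σ.D).map (fun d => σ.D + 1 + colLen σ.halfTop d) ++ σ.bot.map (· / 2 + 1)

def numOnes : ℕ := σ.top.count 1

theorem halfTop_sorted : σ.halfTop.Pairwise (· ≥ ·) :=
  pairwise_map.mpr (σ.top_sorted.imp fun h => Nat.div_le_div_right h)

theorem le_of_mem_halfTop {x : ℕ} (hx : x ∈ σ.halfTop) : x ≤ σ.D := by
  obtain ⟨a, ha, rfl⟩ := mem_map.mp hx
  have := σ.top_le a ha
  omega

theorem numOnes_add_colLen_halfTop : σ.numOnes + colLen σ.halfTop 0 = σ.top.length := by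
  rw [numOnes, colLen, halfTop, countP_map, count_eq_countP,
    length_eq_countP_add_countP (· == 1)]
  congr 1
  refine countP_congr fun x hx => ?_
  obtain ⟨c, rfl⟩ := σ.top_odd x hx
  simp only [Function.comp_apply, beq_iff_eq, decide_eq_true_eq]
  omega

theorem parts_length : σ.parts.length = σ.D + σ.bot.length := by
  simp [parts]

theorem drop_parts : σ.parts.drop σ.D = σ.bot.map (· / 2 + 1) :=
  drop_left' (by simp)

theorem parts_sorted : σ.parts.Pairwise (· ≥ ·) := by
  refine pairwise_append.mpr ⟨?_, ?_, ?_⟩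
  · refine pairwise_map.mpr (pairwise_lt_range.imp fun hde => ?_)
    have := colLen_antitone σ.halfTop hde.le
    omega
  · exact pairwise_map.mpr (σ.bot_sorted.imp fun h => by omega)
  · intro x hx y hy
    obtain ⟨d, _, rfl⟩ := mem_map.mp hx
    obtain ⟨b, hb, rfl⟩ := mem_map.mp hy
    have := σ.bot_le b hb
    omega

theorem parts_pos : ∀ x ∈ σ.parts, 0 < x := by
  intro x hx
  rcases mem_append.mp hx with h | h
  · obtain ⟨d, _, rfl⟩ := mem_map.mp h
    omega
  · obtain ⟨b, _, rfl⟩ := mem_map.mp h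
    omega

theorem two_mul_sum_parts : 2 * σ.parts.sum + 1 + σ.top.length = n + σ.bot.length := by
  have hright : ((range σ.D).map fun d => σ.D + 1 + colLen σ.halfTop d).sum
      = σ.D * (σ.D + 1) + σ.halfTop.sum := by
    have := sum_colLen (c := 0) (N := σ.D) fun x hx => by simpa using σ.le_of_mem_halfTop hx
    simp only [Nat.zero_add, Nat.sub_zero, map_id'] at this
    change ∑ d ∈ Finset.range σ.D, (σ.D + 1 + colLen σ.halfTop d) = _
    rw [Finset.sum_add_distrib, this, Finset.sum_const, Finset.card_range, smul_eq_mul,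
      mul_comm]
  have hbelow : (σ.bot.map (· / 2 + 1)).sum = (σ.bot.map (· / 2)).sum + σ.bot.length := by
    simp [sum_map_add]
  have htop := two_mul_sum_map_div_two_add_length σ.top_odd
  have hbot := two_mul_sum_map_div_two_add_length σ.bot_odd
  have := σ.sum_eq
  rw [parts, sum_append, hright, hbelow, halfTop]
  linarith

theorem getElem_parts_of_lt {d : ℕ} (hd : d < σ.D) :
    σ.parts[d]'(by rw [parts_length]; omega) = σ.D + 1 + colLen σ.halfTop d := by
  simp only [parts]
  rw [getElem_append_left (by simpa using hd)]
  simp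

theorem getElem_parts_of_le {d : ℕ} (hd : σ.D ≤ d) (hd' : d < σ.parts.length) :
    σ.parts[d] = σ.bot[d - σ.D]'(by rw [parts_length] at hd'; omega) / 2 + 1 := by
  simp only [parts]
  rw [getElem_append_right (by simpa using hd)]
  simp

theorem durfee_parts : durfee σ.parts = σ.D := by
  refine eq_of_forall_lt_iff fun d => ?_
  rw [lt_durfee_iff σ.parts_sorted]
  constructor
  · rintro ⟨hd, hrow⟩
    by_contra! hDd
    rw [getD_eq_getElem _ _ hd, getElem_parts_of_le σ hDd hd] at hrow
    have := σ.bot_le _ (getElem_mem (show d - σ.D < σ.bot.length by rw [parts_length] at hd; omega))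
    omega
  · intro hd
    rw [getD_eq_getElem _ _ (by rw [parts_length]; omega), getElem_parts_of_lt σ hd]
    exact ⟨by rw [parts_length]; omega, by omega⟩

theorem two_mul_colLen_parts_add_one {i : ℕ} (hi : i < σ.top.length) :
    2 * colLen σ.parts (σ.D + 1 + i) + 1 = σ.top[i] := by
  have hbelow : (σ.bot.map (· / 2 + 1)).countP (σ.D + 1 + i < ·) = 0 :=
    countP_eq_zero.mpr fun x hx => by
      obtain ⟨b, hb, rfl⟩ := mem_map.mp hx
      have := σ.bot_le b hb
      simp only [decide_eq_true_eq]
      omega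
  have hconj := colLen_map_colLen σ.halfTop_sorted (c := 0) (N := σ.D)
    (fun x hx => by simpa using σ.le_of_mem_halfTop hx) (i := i) (by simpa [halfTop] using hi)
  simp only [Nat.zero_add, Nat.sub_zero] at hconj
  rw [colLen, parts, countP_append, hbelow, Nat.add_zero, countP_map]
  rw [colLen, countP_map] at hconj
  obtain ⟨c, hc⟩ := σ.top_odd _ (getElem_mem hi)
  simp only [Function.comp_def, Nat.add_lt_add_iff_left] at hconj ⊢
  simp only [halfTop, getElem_map] at hconj ⊢
  omega

theorem headD_parts (hne : σ.parts ≠ []) : σ.parts.headD 0 = σ.D + 1 + colLen σ.halfTop 0 := by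
  rcases Nat.eq_zero_or_pos σ.D with hD | hD
  · obtain ⟨b, bs, hbs⟩ := exists_cons_of_ne_nil (by simpa [parts, hD] using hne)
    have hb := σ.bot_le b (by simp [hbs])
    obtain ⟨c, rfl⟩ := σ.bot_odd b (by simp [hbs])
    rw [colLen_eq_zero fun x hx => by simpa [hD] using σ.le_of_mem_halfTop hx]
    simp only [parts, hD, range_zero, map_nil, nil_append, hbs, map_cons, headD_cons]
    omega
  · obtain ⟨D, hD⟩ := Nat.exists_eq_add_of_lt hD
    simp [parts, hD, range_succ_eq_map]

theorem headD_parts_sub_length (hne : σ.parts ≠ []) :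
    (σ.parts.headD 0 : ℤ) - σ.parts.length = oddRank σ + 1 - σ.numOnes := by
  have := σ.numOnes_add_colLen_halfTop
  rw [headD_parts σ hne, parts_length, oddRank]
  omega

theorem numOnes_lt : σ.numOnes < n :=
  (count_le_length ..).trans_lt σ.top_length_lt

theorem sum_parts {j : ℕ} {m : ℤ} (hj : (n : ℤ) = 2 * j + m + 1) (hσ : oddRank σ = m) :
    σ.parts.sum = j := by
  have := two_mul_sum_parts σ
  rw [oddRank] at hσ
  omega

end Parts

section OfParts

/-- The columns `c` of `L` right of its `durfee L × (durfee L + 1)` rectangle, as entries `2c + 1`;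
the last `k` of these columns are empty and give entries `1`. -/
def ofPartsTop (k : ℕ) (L : List ℕ) : List ℕ :=
  (range (k + (L.headD 0 - (durfee L + 1)))).map fun i => 2 * colLen L (durfee L + 1 + i) + 1

def ofPartsBot (L : List ℕ) : List ℕ := (L.drop (durfee L)).map (2 * · - 1)

variable (k : ℕ) {L : List ℕ}

theorem ofPartsTop_length : (ofPartsTop k L).length = k + (L.headD 0 - (durfee L + 1)) := by
  simp [ofPartsTop]

theorem ofPartsBot_length : (ofPartsBot L).length = L.length - durfee L := by
  simp [ofPartsBot]

theorem ofPartsTop_sorted : (ofPartsTop k L).Pairwise (· ≥ ·) := by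
  refine pairwise_map.mpr (pairwise_lt_range.imp fun hde => ?_)
  have := colLen_antitone L (Nat.add_le_add_left hde.le (durfee L + 1))
  omega

theorem ofPartsTop_odd : ∀ x ∈ ofPartsTop k L, Odd x := by
  intro x hx
  obtain ⟨i, _, rfl⟩ := mem_map.mp hx
  exact odd_two_mul_add_one _

theorem ofPartsTop_le (hL : L.Pairwise (· ≥ ·)) : ∀ x ∈ ofPartsTop k L, x ≤ 2 * durfee L + 1 := by
  intro x hx
  obtain ⟨i, _, rfl⟩ := mem_map.mp hx
  have := colLen_antitone L (Nat.le_add_right (durfee L + 1) i)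
  have := colLen_durfee_succ_le hL
  omega

theorem ofPartsBot_sorted (hL : L.Pairwise (· ≥ ·)) : (ofPartsBot L).Pairwise (· ≥ ·) :=
  pairwise_map.mpr ((hL.sublist (drop_sublist _ _)).imp fun h => by omega)

theorem ofPartsBot_odd (hpos : ∀ x ∈ L, 0 < x) : ∀ x ∈ ofPartsBot L, Odd x := by
  intro x hx
  obtain ⟨r, hr, rfl⟩ := mem_map.mp hx
  have := hpos r (mem_of_mem_drop hr)
  exact ⟨r - 1, by omega⟩

theorem ofPartsBot_le (hL : L.Pairwise (· ≥ ·)) : ∀ x ∈ ofPartsBot L, x ≤ 2 * durfee L + 1 := by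
  intro x hx
  obtain ⟨r, hr, rfl⟩ := mem_map.mp hx
  have := le_of_mem_drop_durfee hL hr
  omega

theorem sum_ofPartsTop (hL : L.Pairwise (· ≥ ·)) :
    (ofPartsTop k L).sum = 2 * (L.map (· - (durfee L + 1))).sum
      + (k + (L.headD 0 - (durfee L + 1))) := by
  have hcols := sum_colLen (L := L) (c := durfee L + 1) (N := k + (L.headD 0 - (durfee L + 1)))
    fun x hx => by have := hL.le_headD hx; omega
  change ∑ i ∈ Finset.range _, (2 * colLen L (durfee L + 1 + i) + 1) = _
  rw [Finset.sum_add_distrib, ← Finset.mul_sum, hcols]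
  simp

theorem sum_ofPartsBot (hpos : ∀ x ∈ L, 0 < x) :
    (ofPartsBot L).sum + (L.length - durfee L) = 2 * (L.drop (durfee L)).sum := by
  have := sum_map_two_mul_sub_one_add_length (L := L.drop (durfee L))
    fun x hx => hpos x (mem_of_mem_drop hx)
  rwa [length_drop] at this

theorem ofParts_sum_eq {n : ℕ} (hL : L.Pairwise (· ≥ ·)) (hpos : ∀ x ∈ L, 0 < x) (hne : L ≠ [])
    (hn : 2 * L.sum + k + L.headD 0 = n + L.length) :
    (ofPartsTop k L).sum + (ofPartsBot L).sum + 2 * durfee L ^ 2 + 2 * durfee L + 1 = n := by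
  have := sum_ofPartsTop k hL
  have := sum_ofPartsBot hpos
  have := sum_map_sub_durfee hL
  have := durfee_lt_headD hL hpos hne
  have := durfee_le_length L
  have : durfee L ^ 2 = durfee L * durfee L := sq _
  have : (durfee L + 1) * durfee L = durfee L * durfee L + durfee L := by ring
  omega

def ofParts {n : ℕ} (hL : L.Pairwise (· ≥ ·)) (hpos : ∀ x ∈ L, 0 < x) (hne : L ≠ [])
    (hn : 2 * L.sum + k + L.headD 0 = n + L.length) : OddDurfeeSymbol n where
  D := durfee L
  top := ofPartsTop k L
  bot := ofPartsBot L
  top_sorted := ofPartsTop_sorted k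
  bot_sorted := ofPartsBot_sorted hL
  top_odd := ofPartsTop_odd k
  bot_odd := ofPartsBot_odd hpos
  top_le := ofPartsTop_le k hL
  bot_le := ofPartsBot_le hL
  sum_eq := ofParts_sum_eq k hL hpos hne hn

variable {n : ℕ} (hL : L.Pairwise (· ≥ ·)) (hpos : ∀ x ∈ L, 0 < x) (hne : L ≠ [])
  (hn : 2 * L.sum + k + L.headD 0 = n + L.length)

include hpos hne in
theorem oddRank_ofParts : oddRank (ofParts k hL hpos hne hn) = k + L.headD 0 - L.length - 1 := by
  have := durfee_lt_headD hL hpos hne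
  have := durfee_le_length L
  simp only [oddRank, ofParts, ofPartsTop_length, ofPartsBot_length]
  omega

include hpos hne in
theorem colLen_halfTop_ofParts {d : ℕ} (hd : d < L.length) :
    colLen (ofParts k hL hpos hne hn).halfTop d = L[d] - (durfee L + 1) := by
  have hmap : (ofParts k hL hpos hne hn).halfTop
      = (range (k + (L.headD 0 - (durfee L + 1)))).map fun i => colLen L (durfee L + 1 + i) := by
    simp only [halfTop, ofParts, ofPartsTop, map_map]
    exact map_congr_left fun i _ => by simp only [Function.comp_apply]; omega
  rw [hmap, colLen_map_colLen hL fun x hx => by have := hL.le_headD hx; omega]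

theorem numOnes_ofParts : (ofParts k hL hpos hne hn).numOnes = k := by
  have h := numOnes_add_colLen_halfTop (ofParts k hL hpos hne hn)
  have hlen : 0 < L.length := length_pos_iff.mpr hne
  rw [colLen_halfTop_ofParts k hL hpos hne hn hlen,
    show (ofParts k hL hpos hne hn).top.length = _ from ofPartsTop_length k] at h
  have : L[0] = L.headD 0 := by
    obtain ⟨a, t, rfl⟩ := exists_cons_of_ne_nil hne
    rfl
  omega

theorem parts_ofParts : (ofParts k hL hpos hne hn).parts = L := by
  have htake : (range (durfee L)).map
      (fun d => durfee L + 1 + colLen (ofParts k hL hpos hne hn).halfTop d) = L.take (durfee L) := by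
    refine ext_getElem (by simp [durfee_le_length]) fun d h _ => ?_
    have hd : d < durfee L := by simpa using h
    rw [getElem_map, getElem_range, getElem_take,
      colLen_halfTop_ofParts k hL hpos hne hn (hd.trans_le (durfee_le_length L))]
    have := durfee_lt_getElem hL hd
    omega
  have hdrop : (ofPartsBot L).map (· / 2 + 1) = L.drop (durfee L) := by
    rw [ofPartsBot, map_map]
    refine (map_congr_left fun r hr => ?_).trans (map_id _)
    have := hpos r (mem_of_mem_drop hr)
    simp only [Function.comp_apply, id_eq]
    omega
  conv_rhs => rw [← take_append_drop (durfee L) L, ← htake, ← hdrop]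
  rfl

theorem ofParts_numOnes_parts (σ : OddDurfeeSymbol n) (hk : σ.numOnes = k) (hσ : σ.parts = L) :
    ofParts k hL hpos hne hn = σ := by
  subst hk hσ
  have hD := durfee_parts σ
  refine ext _ hD ?_ ?_
  · refine ext_getElem ?_ fun i _ hi => ?_
    · rw [show (ofParts _ hL hpos hne hn).top.length = _ from ofPartsTop_length _, hD,
        headD_parts σ hne, ← numOnes_add_colLen_halfTop]
      omega
    · simp only [ofParts, ofPartsTop, getElem_map, getElem_range, hD]
      exact two_mul_colLen_parts_add_one σ hi
  · simp only [ofParts, ofPartsBot, hD, drop_parts, map_map]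
    refine (map_congr_left fun b hb => ?_).trans (map_id _)
    obtain ⟨c, rfl⟩ := σ.bot_odd b hb
    simp only [Function.comp_apply, id_eq]
    omega

end OfParts

variable {n j : ℕ} {m : ℤ}

def rankEquiv (hj : (n : ℤ) = 2 * j + m + 1) (hj1 : 1 ≤ j) :
    {σ : OddDurfeeSymbol n // oddRank σ = m} ≃
      Σ k : Fin n, {P : Nat.Partition j // partitionRank P = m + 1 - ((k : ℕ) : ℤ)} where
  toFun σ :=
    have hsum := sum_parts σ.1 hj σ.2
    ⟨⟨σ.1.numOnes, σ.1.numOnes_lt⟩,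
      (equivSortedList j).symm ⟨σ.1.parts, σ.1.parts_sorted, σ.1.parts_pos, hsum⟩, by
        rw [partitionRank_eq, Equiv.apply_symm_apply,
          headD_parts_sub_length _ (List.ne_nil_of_sum_pos (by rw [hsum]; exact hj1)), σ.2]⟩
  invFun p :=
    have hL := (equivSortedList j p.2.1).2
    have hrank := (partitionRank_eq p.2.1).symm.trans p.2.2
    ⟨ofParts p.1 hL.1 hL.2.1 (List.ne_nil_of_sum_pos (by rw [hL.2.2]; exact hj1)) (by omega),
      by rw [oddRank_ofParts]; omega⟩
  left_inv σ := Subtype.ext <| by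
    dsimp only
    exact ofParts_numOnes_parts _ _ _ _ _ σ.1 rfl (by simp)
  right_inv p := Sigma.subtype_ext (Fin.ext <| by dsimp only; exact numOnes_ofParts ..) <| by
    simp only [parts_ofParts, Subtype.coe_eta, Equiv.symm_apply_apply]

end OddDurfeeSymbol

theorem N0_eq_sum_rankCount_general (n : ℕ) (m : ℤ)
    (hpar : (n : ℤ) ≡ m + 1 [ZMOD 2]) (hne : (n : ℤ) ≠ m + 1) :
    N0 m n = ∑ k ∈ Finset.range n, rankCountZ (m + 1 - (k : ℤ)) (((n : ℤ) - m - 1) / 2) := by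
  have hmod : (n : ℤ) % 2 = (m + 1) % 2 := hpar
  rcases hne.lt_or_gt with hlt | hgt
  · rw [Finset.sum_eq_zero fun k _ => by rw [rankCountZ, if_neg (by omega)], N0, Nat.card_eq_zero]
    exact Or.inl ⟨fun σ => absurd σ.2 (by have := σ.1.oddRank_lt; omega)⟩
  · obtain ⟨j, hj⟩ : ∃ j : ℕ, (n : ℤ) = 2 * j + m + 1 := ⟨((n - m - 1) / 2).toNat, by omega⟩
    rw [N0, Nat.card_congr (OddDurfeeSymbol.rankEquiv hj (by omega)), Nat.card_sigma,
      ← Fin.sum_univ_eq_sum_range]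
    refine Finset.sum_congr rfl fun k _ => ?_
    rw [rankCountZ, if_pos (by omega), show (((n : ℤ) - m - 1) / 2).toNat = j by omega]
    rfl

/-- For integers `n ≥ 1` and `m` with `n ≡ m+1 (mod 2)` and `n ≠ m+1`,
`N⁰(m,n) = Σ_{k=0}^{n−1} N(m+1−k,(n−m−1)/2)`. -/
theorem N0_eq_sum_rankCount (n : ℕ) (hn : 1 ≤ n) (m : ℤ)
    (hpar : (n : ℤ) ≡ m + 1 [ZMOD 2]) (hne : (n : ℤ) ≠ m + 1) :
    N0 m n = ∑ k ∈ Finset.range n, rankCountZ (m + 1 - (k : ℤ)) (((n : ℤ) - m - 1) / 2) :=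
  N0_eq_sum_rankCount_general n m hpar hne
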